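/- arXiv:2003.06027 — 2 statements merged into one kernel-verified Lean document; each statement's English description precedes it below -/
import Mathlib

section
/- Let A : ℝ → ℝ^{n×n} be differentiable, F_0,…,F_{N−1} ∈ ℝ^n, U_0 ∈ ℝ^n, and observations U_1^obs,…,U_N^obs ∈ ℝ^n. Define U_{k+1}(θ) = A(θ) U_k(θ) + F_k and J(θ) = (1/2) Σ_{k=1}^N ‖U_k(θ) − U_k^obs‖². Define adjoint variables λ_N = U_N(θ) − U_N^obs and λ_k = A(θ)ᵀ λ_{k+1} + (U_k(θ) − U_k^obs) for k = N−1,…,1. Then J is differentiable and J'(θ) = Σ_{k=1}^N λ_kᵀ A'(θ) U_{k−1}(θ). -/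
open Matrix Finset

/-!
Differentiating the recursion shows that `dU_k/dθ` is the tangent state `V_k`, with `V_0 = 0` and
`V_{k+1} = A V_k + A' U_k`, so `J' = Σ (U_k - U_k^obs) ⬝ V_k`. Writing each residual
`U_k - U_k^obs` as `λ_k - Aᵀ λ_{k+1}` and moving `A` across the dot product, the terms
`λ_{k+1} ⬝ A V_k` cancel against `λ_{k+1} ⬝ V_{k+1}` up to `λ_{k+1} ⬝ A' U_k`, and the sum
telescopes to `Σ λ_k ⬝ A' U_{k-1}`.
-/

section Adjoint

variable {R ι : Type*} [CommRing R] [Fintype ι]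

def tangentState (A A' : Matrix ι ι R) (u : ℕ → ι → R) : ℕ → ι → R
  | 0 => 0
  | k + 1 => A *ᵥ tangentState A A' u k + A' *ᵥ u k

/-- With no terminal condition on `lam`, the identity only holds up to a boundary term at `N`;
in this form it can be proved by induction on `N`. -/
theorem sum_dotProduct_eq_sum_adjoint_dotProduct_sub (A : Matrix ι ι R) (B r lam V : ℕ → ι → R)
    (hV0 : V 0 = 0) (hV : ∀ k, V (k + 1) = A *ᵥ V k + B k) (N : ℕ)
    (hlam : ∀ k, 1 ≤ k → k < N → lam k = Aᵀ *ᵥ lam (k + 1) + r k) :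
    ∑ k ∈ Icc 1 N, r k ⬝ᵥ V k
      = ∑ k ∈ Icc 1 N, lam k ⬝ᵥ B (k - 1) - (lam N - r N) ⬝ᵥ V N := by
  induction N with
  | zero => simp [hV0]
  | succ N ih =>
    have defect : (lam N - r N) ⬝ᵥ V N = lam (N + 1) ⬝ᵥ A *ᵥ V N := by
      rcases Nat.eq_zero_or_pos N with rfl | hN
      · simp [hV0]
      · rw [hlam N hN (by omega), add_sub_cancel_right, dotProduct_comm,
          dotProduct_transpose_mulVec]
    rw [sum_Icc_succ_top (by omega), sum_Icc_succ_top (by omega),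
      ih fun k h1 hk => hlam k h1 (by omega), defect, hV, Nat.add_sub_cancel]
    simp only [dotProduct_add, sub_dotProduct]
    ring

theorem sum_dotProduct_eq_sum_adjoint_dotProduct (A : Matrix ι ι R) (B r lam V : ℕ → ι → R)
    (hV0 : V 0 = 0) (hV : ∀ k, V (k + 1) = A *ᵥ V k + B k) (N : ℕ)
    (hlamN : lam N = r N) (hlam : ∀ k, 1 ≤ k → k < N → lam k = Aᵀ *ᵥ lam (k + 1) + r k) :
    ∑ k ∈ Icc 1 N, r k ⬝ᵥ V k = ∑ k ∈ Icc 1 N, lam k ⬝ᵥ B (k - 1) := by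
  rw [sum_dotProduct_eq_sum_adjoint_dotProduct_sub A B r lam V hV0 hV N hlam, hlamN, sub_self,
    zero_dotProduct, sub_zero]

end Adjoint

section Derivatives

variable {ι : Type*} [Fintype ι]

theorem HasDerivAt.matrix_mulVec {A : ℝ → Matrix ι ι ℝ} {A' : Matrix ι ι ℝ} {u : ℝ → ι → ℝ}
    {u' : ι → ℝ} {θ : ℝ} (hA : ∀ i j, HasDerivAt (fun t => A t i j) (A' i j) θ)
    (hu : HasDerivAt u u' θ) :
    HasDerivAt (fun t => A t *ᵥ u t) (A θ *ᵥ u' + A' *ᵥ u θ) θ := by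
  rw [hasDerivAt_pi] at hu ⊢
  intro i
  simp only [mulVec, dotProduct, Pi.add_apply, ← sum_add_distrib]
  exact HasDerivAt.fun_sum fun j _ => ((hA i j).mul (hu j)).congr_deriv (add_comm _ _)

theorem hasDerivAt_state {A : ℝ → Matrix ι ι ℝ} {A' : Matrix ι ι ℝ} {F : ℕ → ι → ℝ}
    {U : ℕ → ℝ → ι → ℝ} {θ : ℝ} {N : ℕ}
    (hA : ∀ i j, HasDerivAt (fun t => A t i j) (A' i j) θ) (h0 : HasDerivAt (U 0) 0 θ)
    (hrec : ∀ t k, k < N → U (k + 1) t = A t *ᵥ U k t + F k) :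
    ∀ k ≤ N, HasDerivAt (U k) (tangentState (A θ) A' (fun k => U k θ) k) θ := by
  intro k
  induction k with
  | zero => exact fun _ => h0
  | succ k ih =>
    intro hk
    rw [show U (k + 1) = fun t => A t *ᵥ U k t + F k from funext fun t => hrec t k hk]
    exact ((ih (Nat.le_of_succ_le hk)).matrix_mulVec hA).add_const (F k)

theorem HasDerivAt.sum_sub_sq {u : ℝ → ι → ℝ} {u' : ι → ℝ} {θ : ℝ} (hu : HasDerivAt u u' θ)
    (c : ι → ℝ) :
    HasDerivAt (fun t => ∑ i, (u t i - c i) ^ 2) (2 * ((u θ - c) ⬝ᵥ u')) θ := by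
  rw [hasDerivAt_pi] at hu
  simp only [dotProduct, mul_sum, Pi.sub_apply]
  refine HasDerivAt.fun_sum fun i _ => ?_
  refine (((hu i).sub_const (c i)).fun_pow 2).congr_deriv ?_
  push_cast
  ring

end Derivatives

theorem adjoint_state_gradient_formula
    (n N : ℕ)
    (A A' : ℝ → Matrix (Fin n) (Fin n) ℝ)
    (hA : ∀ θ i j, HasDerivAt (fun t => A t i j) (A' θ i j) θ)
    (F obs : ℕ → (Fin n → ℝ)) (U0 : Fin n → ℝ)
    (U : ℕ → ℝ → (Fin n → ℝ))
    (h0 : ∀ θ, U 0 θ = U0)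
    (hrec : ∀ θ k, k < N → U (k + 1) θ = (A θ).mulVec (U k θ) + F k)
    (θ : ℝ)
    (lam : ℕ → (Fin n → ℝ))
    (hlamN : lam N = U N θ - obs N)
    (hlam : ∀ k, 1 ≤ k → k < N →
      lam k = (A θ)ᵀ.mulVec (lam (k + 1)) + (U k θ - obs k)) :
    HasDerivAt
      (fun t => (1 / 2 : ℝ) * ∑ k ∈ Finset.Icc 1 N, ∑ i, (U k t i - obs k i) ^ 2)
      (∑ k ∈ Finset.Icc 1 N, (lam k) ⬝ᵥ ((A' θ).mulVec (U (k - 1) θ))) θ := by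
  set V := tangentState (A θ) (A' θ) (fun k => U k θ)
  have hU : ∀ k ≤ N, HasDerivAt (U k) (V k) θ :=
    hasDerivAt_state (hA θ) (funext h0 ▸ hasDerivAt_const θ U0) hrec
  have hJ := (HasDerivAt.fun_sum fun k (hk : k ∈ Icc 1 N) =>
    (hU k (mem_Icc.mp hk).2).sum_sub_sq (obs k)).const_mul (1 / 2 : ℝ)
  rw [← sum_dotProduct_eq_sum_adjoint_dotProduct (A θ) _ (fun k => U k θ - obs k) lam V rfl
    (fun _ => rfl) N hlamN hlam]
  refine hJ.congr_deriv ?_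
  rw [mul_sum]
  exact sum_congr rfl fun k _ => by ring
end

section
/- Let A : ℝ^p → ℝ^{n×n} be differentiable in a parameter vector θ ∈ ℝ^p, with U_{k+1}(θ) = A(θ) U_k(θ) + F_k, U_0 fixed, and J(θ) = (1/2) Σ_{k=1}^N ‖U_k(θ) − U_k^obs‖². With adjoint variables λ_N = U_N(θ) − U_N^obs, λ_k = A(θ)ᵀ λ_{k+1} + (U_k(θ) − U_k^obs), the partial derivative of J with respect to the i-th component θ_i equals Σ_{k=1}^N λ_kᵀ (∂A/∂θ_i)(θ) U_{k−1}(θ), for each i = 1,…,p. -/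
open Matrix Finset

/-!
Differentiating the recurrence in `θ i` shows that the sensitivities `v k = ∂U k / ∂θ i` solve the
tangent recursion `v (k+1) = A v k + (∂A/∂θ i) U k`, `v 0 = 0`, and that the derivative of the
misfit is `∑ (U k - obs k) ⬝ᵥ v k`. Summation by parts against the adjoint recursion, whose
transpose `Aᵀ` cancels the `A v k` terms, trades each `v k` for the source term
`(∂A/∂θ i) U (k-1)` of the tangent recursion.
-/

section Adjoint

variable {n R : Type*} [Fintype n] [CommRing R]

def tangentSeq (M : Matrix n n R) (g : ℕ → n → R) : ℕ → n → R
  | 0 => 0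
  | k + 1 => g k + M *ᵥ tangentSeq M g k

theorem sum_dotProduct_tangentSeq_eq_sum_adjoint {N : ℕ} (M : Matrix n n R)
    (g r lam : ℕ → n → R) (hlamN : lam N = r N)
    (hlam : ∀ k, 1 ≤ k → k < N → lam k = Mᵀ *ᵥ lam (k + 1) + r k) :
    ∑ k ∈ Icc 1 N, r k ⬝ᵥ tangentSeq M g k = ∑ k ∈ Icc 1 N, lam k ⬝ᵥ g (k - 1) := by
  set v := tangentSeq M g
  have partial_sums : ∀ m < N, ∑ k ∈ Icc 1 m, r k ⬝ᵥ v k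
      = ∑ k ∈ Icc 1 m, lam k ⬝ᵥ g (k - 1) - lam (m + 1) ⬝ᵥ M *ᵥ v m := by
    intro m
    induction m with
    | zero => intro _; simp [v, tangentSeq]
    | succ m ih =>
      intro hm
      have hstep : r (m + 1) ⬝ᵥ v (m + 1) = lam (m + 1) ⬝ᵥ (g m + M *ᵥ v m)
          - lam (m + 2) ⬝ᵥ M *ᵥ v (m + 1) := by
        rw [hlam (m + 1) (by omega) hm, add_dotProduct, mulVec_transpose,
          ← dotProduct_mulVec]
        simp only [v, tangentSeq]
        ring
      rw [sum_Icc_succ_top (by omega), sum_Icc_succ_top (by omega), ih (by omega), hstep,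
        dotProduct_add, Nat.add_sub_cancel]
      ring
  rcases N with _ | N
  · simp
  · rw [sum_Icc_succ_top (by omega), sum_Icc_succ_top (by omega), partial_sums N (by omega),
      hlamN]
    simp only [v, tangentSeq, dotProduct_add, Nat.add_sub_cancel]
    ring

end Adjoint

section Sensitivity

variable {m n : Type*} [Fintype n]

theorem hasDerivAt_mulVec {M : ℝ → Matrix m n ℝ} {M' : Matrix m n ℝ} {u : ℝ → n → ℝ}
    {u' : n → ℝ} {x : ℝ} (hM : ∀ a b, HasDerivAt (fun s => M s a b) (M' a b) x)
    (hu : HasDerivAt u u' x) :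
    HasDerivAt (fun s => M s *ᵥ u s) (M' *ᵥ u x + M x *ᵥ u') x := by
  refine hasDerivAt_pi.2 fun a => ?_
  simp only [mulVec, dotProduct, Pi.add_apply, ← sum_add_distrib]
  exact HasDerivAt.fun_sum fun b _ => (hM a b).mul (hasDerivAt_pi.1 hu b)

theorem hasDerivAt_of_affine_recurrence {u : ℕ → ℝ → n → ℝ} {M : ℝ → Matrix n n ℝ}
    {M' : Matrix n n ℝ} {f : ℕ → n → ℝ} {u₀ : n → ℝ} {N : ℕ} {x : ℝ}
    (hM : ∀ a b, HasDerivAt (fun s => M s a b) (M' a b) x) (hu₀ : ∀ s, u 0 s = u₀)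
    (hrec : ∀ s k, k < N → u (k + 1) s = M s *ᵥ u k s + f k) :
    ∀ k ≤ N, HasDerivAt (u k) (tangentSeq (M x) (fun k => M' *ᵥ u k x) k) x := by
  intro k
  induction k with
  | zero =>
    intro _
    simp only [funext hu₀, tangentSeq]
    exact hasDerivAt_const x u₀
  | succ k ih =>
    intro hk
    have hu : u (k + 1) = fun s => M s *ᵥ u k s + f k := funext fun s => hrec s k hk
    rw [hu]
    exact (hasDerivAt_mulVec hM (ih (by omega))).add_const (f k)

theorem hasDerivAt_half_sum_sq_sub {u : ℕ → ℝ → n → ℝ} {v : ℕ → n → ℝ} {obs : ℕ → n → ℝ}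
    {s : Finset ℕ} {x : ℝ} (hu : ∀ k ∈ s, HasDerivAt (u k) (v k) x) :
    HasDerivAt (fun t => (1 / 2 : ℝ) * ∑ k ∈ s, ∑ j, (u k t j - obs k j) ^ 2)
      (∑ k ∈ s, (u k x - obs k) ⬝ᵥ v k) x := by
  have hterm : ∀ k ∈ s, ∀ j, HasDerivAt (fun t => (u k t j - obs k j) ^ 2)
      (2 * (u k x j - obs k j) * v k j) x := fun k hk j => by
    simpa using ((hasDerivAt_pi.1 (hu k hk) j).sub_const (obs k j)).fun_pow 2
  refine ((HasDerivAt.fun_sum fun k hk =>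
    HasDerivAt.fun_sum fun j _ => hterm k hk j).const_mul (1 / 2 : ℝ)).congr_deriv ?_
  simp only [mul_sum, dotProduct, Pi.sub_apply]
  exact sum_congr rfl fun _ _ => sum_congr rfl fun _ _ => by ring

end Sensitivity

theorem adjoint_state_gradient_formula_vector_parameter
    (n N p : ℕ)
    (A : (Fin p → ℝ) → Matrix (Fin n) (Fin n) ℝ)
    (A' : (Fin p → ℝ) → Fin p → Matrix (Fin n) (Fin n) ℝ)
    (hA : ∀ θ i a b, HasDerivAt (fun s => A (Function.update θ i s) a b) (A' θ i a b) (θ i))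
    (F obs : ℕ → (Fin n → ℝ)) (U0 : Fin n → ℝ)
    (U : ℕ → (Fin p → ℝ) → (Fin n → ℝ))
    (h0 : ∀ θ, U 0 θ = U0)
    (hrec : ∀ θ k, k < N → U (k + 1) θ = (A θ).mulVec (U k θ) + F k)
    (θ : Fin p → ℝ)
    (lam : ℕ → (Fin n → ℝ))
    (hlamN : lam N = U N θ - obs N)
    (hlam : ∀ k, 1 ≤ k → k < N →
      lam k = (A θ)ᵀ.mulVec (lam (k + 1)) + (U k θ - obs k)) :
    ∀ i : Fin p,
      HasDerivAt
        (fun s => (1 / 2 : ℝ) * ∑ k ∈ Finset.Icc 1 N,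
          ∑ j, (U k (Function.update θ i s) j - obs k j) ^ 2)
        (∑ k ∈ Finset.Icc 1 N, (lam k) ⬝ᵥ ((A' θ i).mulVec (U (k - 1) θ))) (θ i) := by
  intro i
  have hstates := hasDerivAt_of_affine_recurrence (u := fun k s => U k (Function.update θ i s))
    (hA θ i) (fun s => h0 _) (fun s k hk => hrec _ k hk)
  simp only [Function.update_eq_self] at hstates
  have hJ := hasDerivAt_half_sum_sq_sub (obs := obs) (s := Icc 1 N)
    fun k hk => hstates k (mem_Icc.1 hk).2
  rwa [Function.update_eq_self, sum_dotProduct_tangentSeq_eq_sum_adjoint (A θ) _ _ lam hlamN hlam] at hJ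
end
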